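/- arXiv:1405.3034 — 3 statements merged into one kernel-verified Lean document; each statement's English description precedes it below -/
import Mathlib

section
/- Let the G-AMA map be T(Y) = C_λ(Y + τY⁻¹ − S) + S (entrywise clip), and suppose Y* is a fixed point of T with Y* ∈ S₊₊^p. If Y and Y* both lie in the set {Z : αI ⪯ Z ⪯ βI} along the segment joining them and 0 < τ < α², then ‖T(Y) − Y*‖_F ≤ γ‖Y − Y*‖_F with γ = max(|1 − τ/α²|, |1 − τ/β²|) < 1. -/
attribute [local instance] Matrix.frobeniusNormedAddCommGroup

/-- Clip operator. -/
noncomputable def clip (l x : ℝ) : ℝ := min (max x (-l)) l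

/-- The G-AMA map `T(Y) = C_λ(Y + τ Y⁻¹ − S) + S` (entrywise clip). -/
noncomputable def gamaMap {p : ℕ} (l τ : ℝ) (S Y : Matrix (Fin p) (Fin p) ℝ) :
    Matrix (Fin p) (Fin p) ℝ :=
  Matrix.of fun i j => clip l ((Y + τ • Y⁻¹ - S) i j) + S i j

/-!
Write `Δ = Y - Y*`. Since clipping is nonexpansive and `Y*` is a fixed point,
`‖T Y - Y*‖ ≤ ‖(Y + τ Y⁻¹) - (Y* + τ Y*⁻¹)‖ = ‖Δ - τ Y⁻¹ Δ Y*⁻¹‖`.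
Diagonalize `Y = U diag(μ) Uᵀ` and `Y* = V diag(ν) Vᵀ` with orthogonal `U`, `V`. Conjugation
`X ↦ Uᵀ X V` preserves the Frobenius norm and turns `X ↦ X - τ Y⁻¹ X Y*⁻¹` into the entrywise
multiplication by `1 - τ / (μ i * ν j)`. The endpoints of the segment give `μ i, ν j ∈ [α, β]`,
so each factor lies between `1 - τ / α²` and `1 - τ / β²`, whence the bound `γ`.
-/

open Matrix

lemma abs_clip_sub_clip_le (l x y : ℝ) : |clip l x - clip l y| ≤ |x - y| :=
  calc |clip l x - clip l y| ≤ max |max x (-l) - max y (-l)| |l - l| :=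
        abs_min_sub_min_le_max _ _ _ _
    _ ≤ |x - y| := by
      rw [sub_self, abs_zero]
      exact max_le (abs_max_sub_max_le_abs _ _ _) (abs_nonneg _)

lemma abs_one_sub_div_lt_one {τ s : ℝ} (hτ0 : 0 < τ) (hτs : τ < s) : |1 - τ / s| < 1 := by
  have hs : 0 < s := hτ0.trans hτs
  rw [abs_lt]
  constructor
  · linarith [(div_lt_one hs).mpr hτs]
  · linarith [div_pos hτ0 hs]

lemma abs_one_sub_div_mul_le {τ α β a b : ℝ} (hτ0 : 0 ≤ τ) (hα : 0 < α)
    (ha : a ∈ Set.Icc α β) (hb : b ∈ Set.Icc α β) :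
    |1 - τ / (a * b)| ≤ max |1 - τ / α ^ 2| |1 - τ / β ^ 2| := by
  have ha0 : 0 < a := hα.trans_le ha.1
  have hb0 : 0 < b := hα.trans_le hb.1
  refine abs_le_max_abs_abs (sub_le_sub_left ?_ 1) (sub_le_sub_left ?_ 1)
  · refine div_le_div_of_nonneg_left hτ0 (by positivity) ?_
    rw [sq]
    exact mul_le_mul ha.1 hb.1 hα.le ha0.le
  · refine div_le_div_of_nonneg_left hτ0 (mul_pos ha0 hb0) ?_
    rw [sq]
    exact mul_le_mul ha.2 hb.2 hb0.le (ha0.trans_le ha.2).le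

namespace Matrix

variable {m n : Type*} [Fintype m] [Fintype n]

lemma frobenius_norm_sq_eq_sum (A : Matrix m n ℝ) : ‖A‖ ^ 2 = ∑ i, ∑ j, A i j ^ 2 := by
  rw [frobenius_norm_def, ← Real.rpow_natCast, ← Real.rpow_mul (by positivity)]
  norm_num

lemma frobenius_norm_sq_eq_trace (A : Matrix m n ℝ) : ‖A‖ ^ 2 = trace (Aᵀ * A) := by
  rw [frobenius_norm_sq_eq_sum, trace, Finset.sum_comm]
  simp only [diag_apply, mul_apply, transpose_apply, sq]

lemma frobenius_norm_le_mul_of_abs_le {A B : Matrix m n ℝ} {c : ℝ} (hc : 0 ≤ c)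
    (h : ∀ i j, |A i j| ≤ c * |B i j|) : ‖A‖ ≤ c * ‖B‖ := by
  refine le_of_pow_le_pow_left₀ two_ne_zero (by positivity) ?_
  rw [mul_pow, frobenius_norm_sq_eq_sum, frobenius_norm_sq_eq_sum, Finset.mul_sum]
  refine Finset.sum_le_sum fun i _ => ?_
  rw [Finset.mul_sum]
  refine Finset.sum_le_sum fun j _ => ?_
  rw [← sq_abs, ← sq_abs (B i j), ← mul_pow]
  exact pow_le_pow_left₀ (abs_nonneg _) (h i j) 2

lemma transpose_mul_self_of_mem_unitaryGroup {U : Matrix m m ℝ} [DecidableEq m]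
    (hU : U ∈ unitaryGroup m ℝ) : Uᵀ * U = 1 := by
  simpa [star_eq_conjTranspose] using mem_unitaryGroup_iff'.mp hU

lemma mul_transpose_self_of_mem_unitaryGroup {U : Matrix m m ℝ} [DecidableEq m]
    (hU : U ∈ unitaryGroup m ℝ) : U * Uᵀ = 1 := by
  simpa [star_eq_conjTranspose] using mem_unitaryGroup_iff.mp hU

lemma frobenius_norm_unitary_mul {U : Matrix m m ℝ} [DecidableEq m]
    (hU : U ∈ unitaryGroup m ℝ) (A : Matrix m n ℝ) : ‖U * A‖ = ‖A‖ := by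
  refine (pow_left_inj₀ (norm_nonneg _) (norm_nonneg _) two_ne_zero).mp ?_
  rw [frobenius_norm_sq_eq_trace, frobenius_norm_sq_eq_trace, transpose_mul, Matrix.mul_assoc,
    ← Matrix.mul_assoc Uᵀ, transpose_mul_self_of_mem_unitaryGroup hU, Matrix.one_mul]

lemma frobenius_norm_mul_unitary {V : Matrix n n ℝ} [DecidableEq n]
    (hV : V ∈ unitaryGroup n ℝ) (A : Matrix m n ℝ) : ‖A * V‖ = ‖A‖ := by
  rw [← frobenius_norm_transpose, transpose_mul,
    frobenius_norm_unitary_mul (transpose_mem_unitaryGroup_iff.mpr hV), frobenius_norm_transpose]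

variable [DecidableEq n]

lemma inv_mul_sub_mul_inv {A B : Matrix n n ℝ} (hA : IsUnit A.det) (hB : IsUnit B.det) :
    A⁻¹ * (A - B) * B⁻¹ = B⁻¹ - A⁻¹ := by
  rw [Matrix.mul_sub, Matrix.sub_mul, nonsing_inv_mul A hA, Matrix.one_mul, Matrix.mul_assoc,
    mul_nonsing_inv B hB, Matrix.mul_one]

open scoped MatrixOrder ComplexOrder in
lemma IsHermitian.eigenvalues_mem_Icc {𝕜 : Type*} [RCLike 𝕜] {A : Matrix n n 𝕜}
    (hA : A.IsHermitian) {α β : ℝ} (hα : (A - α • 1).PosSemidef) (hβ : (β • 1 - A).PosSemidef)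
    (i : n) : hA.eigenvalues i ∈ Set.Icc α β := by
  have hαA : algebraMap ℝ _ α ≤ A := by rwa [le_iff, Algebra.algebraMap_eq_smul_one]
  have hAβ : A ≤ algebraMap ℝ _ β := by rwa [le_iff, Algebra.algebraMap_eq_smul_one]
  rw [algebraMap_le_iff_le_spectrum] at hαA
  rw [le_algebraMap_iff_spectrum_le] at hAβ
  exact ⟨hαA _ (hA.eigenvalues_mem_spectrum_real i), hAβ _ (hA.eigenvalues_mem_spectrum_real i)⟩

lemma IsHermitian.eq_mul_diagonal_mul_transpose {A : Matrix n n ℝ} (hA : A.IsHermitian) :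
    A = (hA.eigenvectorUnitary : Matrix n n ℝ) * diagonal hA.eigenvalues *
      (hA.eigenvectorUnitary : Matrix n n ℝ)ᵀ := by
  conv_lhs => rw [hA.spectral_theorem]
  simp [Unitary.conjStarAlgAut_apply, star_eq_conjTranspose]

lemma PosDef.inv_eq_mul_diagonal_mul_transpose {A : Matrix n n ℝ} (hA : A.PosDef) :
    A⁻¹ = (hA.1.eigenvectorUnitary : Matrix n n ℝ) * diagonal hA.1.eigenvalues⁻¹ *
      (hA.1.eigenvectorUnitary : Matrix n n ℝ)ᵀ := by
  have hspec := hA.1.eq_mul_diagonal_mul_transpose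
  have hU := transpose_mul_self_of_mem_unitaryGroup hA.1.eigenvectorUnitary.2
  set U := (hA.1.eigenvectorUnitary : Matrix n n ℝ)
  set v := hA.1.eigenvalues
  have hv : diagonal v⁻¹ * diagonal v = 1 := by
    rw [diagonal_mul_diagonal, ← diagonal_one]
    exact congrArg diagonal (funext fun i => inv_mul_cancel₀ (hA.eigenvalues_pos i).ne')
  refine inv_eq_left_inv ?_
  rw [hspec, Matrix.mul_assoc, ← Matrix.mul_assoc Uᵀ, ← Matrix.mul_assoc Uᵀ, hU, Matrix.one_mul,
    Matrix.mul_assoc U, ← Matrix.mul_assoc (diagonal v⁻¹), hv, Matrix.one_mul,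
    mul_transpose_self_of_mem_unitaryGroup hA.1.eigenvectorUnitary.2]

lemma frobenius_norm_sub_smul_conj_diagonal_le {U V : Matrix n n ℝ} (hU : U ∈ unitaryGroup n ℝ)
    (hV : V ∈ unitaryGroup n ℝ) {a b : n → ℝ} {τ c : ℝ} (hc : 0 ≤ c)
    (h : ∀ i j, |1 - τ * (a i * b j)| ≤ c) (X : Matrix n n ℝ) :
    ‖X - τ • (U * diagonal a * Uᵀ * X * (V * diagonal b * Vᵀ))‖ ≤ c * ‖X‖ := by
  have hUt := transpose_mem_unitaryGroup_iff.mpr hU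
  have hVt := transpose_mem_unitaryGroup_iff.mpr hV
  set M := Uᵀ * X * V
  have hXM : X = U * M * Vᵀ := by
    rw [← Matrix.mul_assoc, ← Matrix.mul_assoc, mul_transpose_self_of_mem_unitaryGroup hU,
      Matrix.one_mul, Matrix.mul_assoc, mul_transpose_self_of_mem_unitaryGroup hV, Matrix.mul_one]
  have hconj : X - τ • (U * diagonal a * Uᵀ * X * (V * diagonal b * Vᵀ)) =
      U * (M - τ • (diagonal a * M * diagonal b)) * Vᵀ := by
    rw [Matrix.mul_sub, Matrix.sub_mul, ← hXM, Matrix.mul_smul, Matrix.smul_mul]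
    simp only [M, Matrix.mul_assoc]
  have hM : ‖M‖ = ‖X‖ := by rw [frobenius_norm_mul_unitary hV, frobenius_norm_unitary_mul hUt]
  rw [hconj, frobenius_norm_mul_unitary hVt, frobenius_norm_unitary_mul hU, ← hM]
  refine frobenius_norm_le_mul_of_abs_le hc fun i j => ?_
  have hentry : (M - τ • (diagonal a * M * diagonal b)) i j = (1 - τ * (a i * b j)) * M i j := by
    simp only [Matrix.sub_apply, Matrix.smul_apply, mul_diagonal, diagonal_mul, smul_eq_mul]
    ring
  rw [hentry, abs_mul]
  exact mul_le_mul_of_nonneg_right (h i j) (abs_nonneg _)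

lemma PosDef.frobenius_norm_sub_smul_inv_mul_mul_inv_le {A B : Matrix n n ℝ}
    (hA : A.PosDef) (hB : B.PosDef) {τ c : ℝ} (hc : 0 ≤ c)
    (h : ∀ i j, |1 - τ / (hA.1.eigenvalues i * hB.1.eigenvalues j)| ≤ c) (X : Matrix n n ℝ) :
    ‖X - τ • (A⁻¹ * X * B⁻¹)‖ ≤ c * ‖X‖ := by
  rw [hA.inv_eq_mul_diagonal_mul_transpose, hB.inv_eq_mul_diagonal_mul_transpose]
  refine frobenius_norm_sub_smul_conj_diagonal_le hA.1.eigenvectorUnitary.2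
    hB.1.eigenvectorUnitary.2 hc (fun i j => ?_) X
  simpa only [Pi.inv_apply, div_eq_mul_inv, mul_inv] using h i j

end Matrix

lemma norm_gamaMap_sub_gamaMap_le {p : ℕ} (l τ : ℝ) (S Y Z : Matrix (Fin p) (Fin p) ℝ) :
    ‖gamaMap l τ S Y - gamaMap l τ S Z‖ ≤ ‖(Y + τ • Y⁻¹) - (Z + τ • Z⁻¹)‖ := by
  have := frobenius_norm_le_mul_of_abs_le (A := gamaMap l τ S Y - gamaMap l τ S Z)
    (B := (Y + τ • Y⁻¹) - (Z + τ • Z⁻¹)) zero_le_one fun i j => by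
      simp only [gamaMap, Matrix.sub_apply, of_apply, add_sub_add_right_eq_sub, one_mul]
      simpa only [Matrix.sub_apply, sub_sub_sub_cancel_right] using
        abs_clip_sub_clip_le l ((Y + τ • Y⁻¹ - S) i j) ((Z + τ • Z⁻¹ - S) i j)
  rwa [one_mul] at this

theorem gama_linear_contraction_general {p : ℕ}
    (S Y Ystar : Matrix (Fin p) (Fin p) ℝ)
    (hY : Y.PosDef) (hYs : Ystar.PosDef)
    (l τ α β : ℝ) (hα : 0 < α) (hαβ : α ≤ β)
    (hτ0 : 0 < τ) (hτ : τ < α ^ 2)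
    (hfix : gamaMap l τ S Ystar = Ystar)
    (hseg : ∀ δ : ℝ, δ ∈ Set.Icc (0 : ℝ) 1 →
      ((δ • Y + (1 - δ) • Ystar) - α • (1 : Matrix (Fin p) (Fin p) ℝ)).PosSemidef ∧
      (β • (1 : Matrix (Fin p) (Fin p) ℝ) - (δ • Y + (1 - δ) • Ystar)).PosSemidef) :
    ‖gamaMap l τ S Y - Ystar‖ ≤ max |1 - τ / α ^ 2| |1 - τ / β ^ 2| * ‖Y - Ystar‖ ∧
      max |1 - τ / α ^ 2| |1 - τ / β ^ 2| < 1 := by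
  set γ := max |1 - τ / α ^ 2| |1 - τ / β ^ 2|
  have hγ : γ < 1 := max_lt (abs_one_sub_div_lt_one hτ0 hτ)
    (abs_one_sub_div_lt_one hτ0 (hτ.trans_le (pow_le_pow_left₀ hα.le hαβ 2)))
  obtain ⟨hYα, hYβ⟩ : (Y - α • 1).PosSemidef ∧ (β • 1 - Y).PosSemidef := by
    simpa using hseg 1 ⟨zero_le_one, le_rfl⟩
  obtain ⟨hYsα, hYsβ⟩ : (Ystar - α • 1).PosSemidef ∧ (β • 1 - Ystar).PosSemidef := by
    simpa using hseg 0 ⟨le_rfl, zero_le_one⟩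
  refine ⟨?_, hγ⟩
  calc ‖gamaMap l τ S Y - Ystar‖ = ‖gamaMap l τ S Y - gamaMap l τ S Ystar‖ := by rw [hfix]
    _ ≤ ‖(Y + τ • Y⁻¹) - (Ystar + τ • Ystar⁻¹)‖ := norm_gamaMap_sub_gamaMap_le l τ S Y Ystar
    _ = ‖(Y - Ystar) - τ • (Y⁻¹ * (Y - Ystar) * Ystar⁻¹)‖ := by
      rw [inv_mul_sub_mul_inv ((isUnit_iff_isUnit_det _).mp hY.isUnit)
        ((isUnit_iff_isUnit_det _).mp hYs.isUnit)]
      congr 1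
      module
    _ ≤ γ * ‖Y - Ystar‖ :=
      hY.frobenius_norm_sub_smul_inv_mul_mul_inv_le hYs ((abs_nonneg _).trans (le_max_left _ _))
        (fun i j => abs_one_sub_div_mul_le hτ0.le hα (hY.1.eigenvalues_mem_Icc hYα hYβ i)
          (hYs.1.eigenvalues_mem_Icc hYsα hYsβ j)) _

theorem gama_linear_contraction {p : ℕ} (hp : 0 < p)
    (S Y Ystar : Matrix (Fin p) (Fin p) ℝ) (hS : S.IsSymm)
    (hY : Y.PosDef) (hYs : Ystar.PosDef)
    (l τ α β : ℝ) (hl : 0 < l) (hα : 0 < α) (hαβ : α ≤ β)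
    (hτ0 : 0 < τ) (hτ : τ < α ^ 2)
    (hfix : gamaMap l τ S Ystar = Ystar)
    (hseg : ∀ δ : ℝ, δ ∈ Set.Icc (0 : ℝ) 1 →
      ((δ • Y + (1 - δ) • Ystar) - α • (1 : Matrix (Fin p) (Fin p) ℝ)).PosSemidef ∧
      (β • (1 : Matrix (Fin p) (Fin p) ℝ) - (δ • Y + (1 - δ) • Ystar)).PosSemidef) :
    ‖gamaMap l τ S Y - Ystar‖ ≤ max |1 - τ / α ^ 2| |1 - τ / β ^ 2| * ‖Y - Ystar‖ ∧
      max |1 - τ / α ^ 2| |1 - τ / β ^ 2| < 1 :=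
  gama_linear_contraction_general S Y Ystar hY hYs l τ α β hα hαβ hτ0 hτ hfix hseg
end

section
/- For a symmetric positive definite matrix Y and symmetric matrix S with ‖Y − S‖_∞ ≤ λ (entrywise max bound) and any X ∈ S₊₊^p, the duality gap satisfies −log det Y − p + (−log det X + ⟨S, X⟩ + λ‖X‖₁) ≥ 0, with equality if and only if Y = X⁻¹ and the optimality conditions hold. In particular, the weaker statement: −log det Y − p − log det X + ⟨X, Y⟩ ≥ 0 for all X, Y ∈ S₊₊^p, with equality iff Y = X⁻¹. -/
/-! The matrix `M = X^{1/2} Y X^{1/2}` is positive definite with `tr M = ⟨X, Y⟩` and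
`det M = det X · det Y`, so `-log det Y - p - log det X + ⟨X, Y⟩ = ∑ᵢ (μᵢ - 1 - log μᵢ)` over
the eigenvalues `μᵢ` of `M`. Each term is nonnegative by `log t ≤ t - 1`, with equality only at
`t = 1`; all `μᵢ = 1` means `M = 1`, i.e. `Y = X⁻¹`. The first gap dominates this one because
`⟨Y, X⟩ ≤ ⟨S, X⟩ + λ‖X‖₁` when `Y - S` is entrywise bounded by `λ`. -/

namespace Matrix

variable {n : Type*} [Fintype n]

lemma trace_mul_le_of_abs_le {m : Type*} [Fintype m] {A : Matrix m n ℝ} {l : ℝ}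
    (hA : ∀ i j, |A i j| ≤ l) (B : Matrix n m ℝ) :
    (A * B).trace ≤ l * ∑ i, ∑ j, |B i j| := by
  calc (A * B).trace = ∑ i, ∑ j, A i j * B j i := rfl
    _ ≤ ∑ i, ∑ j, l * |B j i| := by
      refine Finset.sum_le_sum fun i _ => Finset.sum_le_sum fun j _ => ?_
      calc A i j * B j i ≤ |A i j| * |B j i| := by rw [← abs_mul]; exact le_abs_self _
        _ ≤ l * |B j i| := by gcongr; exact hA i j
    _ = l * ∑ i, ∑ j, |B i j| := by
      simp only [Finset.mul_sum]; exact Finset.sum_comm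

variable [DecidableEq n] {M : Matrix n n ℝ}

lemma PosDef.trace_sub_card_sub_log_det (hM : M.PosDef) :
    M.trace - Fintype.card n - Real.log M.det =
      ∑ i, (hM.1.eigenvalues i - 1 - Real.log (hM.1.eigenvalues i)) := by
  rw [hM.1.trace_eq_sum_eigenvalues, hM.1.det_eq_prod_eigenvalues]
  simp only [RCLike.ofReal_real_eq_id, id_eq]
  rw [Real.log_prod fun i _ => (hM.eigenvalues_pos i).ne']
  simp [Finset.sum_sub_distrib]

lemma PosDef.log_det_le_trace_sub_card (hM : M.PosDef) :
    Real.log M.det ≤ M.trace - Fintype.card n := by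
  have h := hM.trace_sub_card_sub_log_det
  have : 0 ≤ ∑ i, (hM.1.eigenvalues i - 1 - Real.log (hM.1.eigenvalues i)) :=
    Finset.sum_nonneg fun i _ => by
      linarith [Real.log_le_sub_one_of_pos (hM.eigenvalues_pos i)]
  linarith

lemma PosDef.log_det_eq_trace_sub_card_iff (hM : M.PosDef) :
    Real.log M.det = M.trace - Fintype.card n ↔ M = 1 := by
  refine ⟨fun h => ?_, by rintro rfl; simp⟩
  have hsum : ∑ i, (hM.1.eigenvalues i - 1 - Real.log (hM.1.eigenvalues i)) = 0 := by
    rw [← hM.trace_sub_card_sub_log_det]; linarith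
  have hterm i : hM.1.eigenvalues i - 1 - Real.log (hM.1.eigenvalues i) = 0 :=
    (Finset.sum_eq_zero_iff_of_nonneg fun i _ => by
      linarith [Real.log_le_sub_one_of_pos (hM.eigenvalues_pos i)]).mp hsum i (Finset.mem_univ i)
  have heig i : hM.1.eigenvalues i = 1 := by
    by_contra hne
    linarith [Real.log_lt_sub_one_of_pos (hM.eigenvalues_pos i) hne, hterm i]
  refine CFC.eq_one_of_spectrum_subset_one (R := ℝ) M ?_ hM.1.isSelfAdjoint
  rw [hM.1.spectrum_real_eq_range_eigenvalues]
  rintro _ ⟨i, rfl⟩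
  exact heig i

variable {X Y : Matrix n n ℝ}

open scoped MatrixOrder in
lemma PosDef.exists_posDef_trace_eq_trace_mul (hX : X.PosDef) (hY : Y.PosDef) :
    ∃ M : Matrix n n ℝ, M.PosDef ∧ M.trace = (X * Y).trace ∧ M.det = X.det * Y.det ∧
      (M = 1 ↔ Y = X⁻¹) := by
  obtain ⟨Q, hQ, rfl⟩ : ∃ Q : Matrix n n ℝ, Q.PosDef ∧ Q * Q = X :=
    ⟨CFC.sqrt X,
      isStrictlyPositive_iff_posDef.mp (IsStrictlyPositive.sqrt X hX.isStrictlyPositive),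
      CFC.sqrt_mul_sqrt_self X hX.posSemidef.nonneg⟩
  refine ⟨Q * Y * Q, ?_, trace_mul_cycle .., by simp only [det_mul]; ring, ?_⟩
  · simpa only [hQ.1.eq] using hY.conjTranspose_mul_mul_same (mulVec_injective_of_isUnit hQ.isUnit)
  · obtain ⟨u, rfl⟩ := hQ.isUnit
    rw [Units.mul_eq_one_iff_eq_inv, ← Units.eq_inv_mul_iff_mul_eq, Matrix.mul_inv_rev,
      coe_units_inv]

lemma PosDef.log_det_add_log_det_le (hX : X.PosDef) (hY : Y.PosDef) :
    Real.log X.det + Real.log Y.det ≤ (X * Y).trace - Fintype.card n := by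
  obtain ⟨M, hM, htrace, hdet, -⟩ := hX.exists_posDef_trace_eq_trace_mul hY
  rw [← Real.log_mul hX.det_pos.ne' hY.det_pos.ne', ← hdet, ← htrace]
  exact hM.log_det_le_trace_sub_card

lemma PosDef.log_det_add_log_det_eq_iff (hX : X.PosDef) (hY : Y.PosDef) :
    Real.log X.det + Real.log Y.det = (X * Y).trace - Fintype.card n ↔ Y = X⁻¹ := by
  obtain ⟨M, hM, htrace, hdet, hone⟩ := hX.exists_posDef_trace_eq_trace_mul hY
  rw [← Real.log_mul hX.det_pos.ne' hY.det_pos.ne', ← hdet, ← htrace, ← hone]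
  exact hM.log_det_eq_trace_sub_card_iff

end Matrix

open Matrix

theorem duality_gap_nonneg_general {p : ℕ} (X Y S : Matrix (Fin p) (Fin p) ℝ)
    (hX : X.PosDef) (hY : Y.PosDef)
    (l : ℝ) (hfeas : ∀ i j, |Y i j - S i j| ≤ l) :
    (0 ≤ -Real.log Y.det - p +
        (-Real.log X.det + (S * X).trace + l * ∑ i, ∑ j, |X i j|)) ∧
    (∀ X' Y' : Matrix (Fin p) (Fin p) ℝ, X'.PosDef → Y'.PosDef →
      0 ≤ -Real.log Y'.det - p - Real.log X'.det + (X' * Y').trace ∧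
      (-Real.log Y'.det - p - Real.log X'.det + (X' * Y').trace = 0 ↔
        Y' = X'⁻¹)) := by
  have hgap (X' Y' : Matrix (Fin p) (Fin p) ℝ) (hX' : X'.PosDef) (hY' : Y'.PosDef) :
      0 ≤ -Real.log Y'.det - p - Real.log X'.det + (X' * Y').trace ∧
      (-Real.log Y'.det - p - Real.log X'.det + (X' * Y').trace = 0 ↔ Y' = X'⁻¹) := by
    have hle := hX'.log_det_add_log_det_le hY'
    have heq := hX'.log_det_add_log_det_eq_iff hY'
    rw [Fintype.card_fin] at hle heq
    exact ⟨by linarith, by rw [← heq]; constructor <;> intro h <;> linarith⟩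
  have hfeas_trace : ((Y - S) * X).trace ≤ l * ∑ i, ∑ j, |X i j| :=
    trace_mul_le_of_abs_le hfeas X
  rw [sub_mul, trace_sub, trace_mul_comm] at hfeas_trace
  exact ⟨by linarith [(hgap X Y hX hY).1], hgap⟩

theorem duality_gap_nonneg {p : ℕ} (X Y S : Matrix (Fin p) (Fin p) ℝ)
    (hX : X.PosDef) (hY : Y.PosDef) (hS : S.IsSymm)
    (l : ℝ) (hl : 0 < l) (hfeas : ∀ i j, |Y i j - S i j| ≤ l) :
    (0 ≤ -Real.log Y.det - p +
        (-Real.log X.det + (S * X).trace + l * ∑ i, ∑ j, |X i j|)) ∧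
    (∀ X' Y' : Matrix (Fin p) (Fin p) ℝ, X'.PosDef → Y'.PosDef →
      0 ≤ -Real.log Y'.det - p - Real.log X'.det + (X' * Y').trace ∧
      (-Real.log Y'.det - p - Real.log X'.det + (X' * Y').trace = 0 ↔
        Y' = X'⁻¹)) :=
  duality_gap_nonneg_general X Y S hX hY l hfeas
end

section
/- Fixed point characterization: let S be symmetric, λ, τ > 0, and X* ∈ S₊₊^p. Then X* satisfies the entrywise optimality conditions — X*(i,j) = 0 implies |S(i,j) − (X*⁻¹)(i,j)| ≤ λ, and X*(i,j) ≠ 0 implies S(i,j) − (X*⁻¹)(i,j) = −λ·sign(X*(i,j)) — if and only if Y* = X*⁻¹ satisfies Y* = C_λ(τY*⁻¹ + Y* − S) + S entrywise, where C_λ is the clip to [−λ, λ]. -/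
section Clip

variable {l d t : ℝ}

theorem clip_eq_self_iff (hl : 0 ≤ l) : clip l d = d ↔ |d| ≤ l := by
  rw [abs_le, clip, min_def, max_def]
  constructor
  · intro h
    split_ifs at h <;> constructor <;> linarith
  · rintro ⟨hd₁, hd₂⟩
    split_ifs <;> linarith

theorem eq_clip_add_iff_of_pos (hl : 0 ≤ l) (ht : 0 < t) : d = clip l (t + d) ↔ d = l := by
  rw [clip, min_def, max_def]
  constructor
  · intro h
    split_ifs at h <;> linarith
  · rintro rfl
    split_ifs <;> linarith

theorem eq_clip_add_iff_of_neg (hl : 0 ≤ l) (ht : t < 0) : d = clip l (t + d) ↔ d = -l := by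
  rw [clip, min_def, max_def]
  constructor
  · intro h
    split_ifs at h <;> linarith
  · rintro rfl
    split_ifs <;> linarith

theorem eq_clip_mul_add_iff (hl : 0 ≤ l) {τ : ℝ} (hτ : 0 < τ) (a : ℝ) :
    d = clip l (τ * a + d) ↔ (a = 0 → |d| ≤ l) ∧ (a ≠ 0 → d = l * Real.sign a) := by
  rcases lt_trichotomy a 0 with ha | rfl | ha
  · simp [ha.ne, Real.sign_of_neg ha, eq_clip_add_iff_of_neg hl (mul_neg_of_pos_of_neg hτ ha)]
  · simpa using (eq_comm.trans (clip_eq_self_iff hl))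
  · simp [ha.ne', Real.sign_of_pos ha, eq_clip_add_iff_of_pos hl (mul_pos hτ ha)]

end Clip

theorem fixed_point_characterization_general {p : ℕ}
    (Xstar S : Matrix (Fin p) (Fin p) ℝ)
    (l τ : ℝ) (hl : 0 < l) (hτ : 0 < τ) :
    ((∀ i j, (Xstar i j = 0 → |S i j - Xstar⁻¹ i j| ≤ l) ∧
        (Xstar i j ≠ 0 → S i j - Xstar⁻¹ i j = -l * Real.sign (Xstar i j))) ↔
      (∀ i j, Xstar⁻¹ i j =
        clip l (τ * Xstar i j + (Xstar⁻¹ i j - S i j)) + S i j)) := by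
  refine forall₂_congr fun i j => ?_
  rw [← sub_eq_iff_eq_add, eq_clip_mul_add_iff hl.le hτ, ← neg_sub (Xstar⁻¹ i j), abs_neg,
    neg_mul, neg_inj]

theorem fixed_point_characterization {p : ℕ}
    (Xstar S : Matrix (Fin p) (Fin p) ℝ) (hX : Xstar.PosDef) (hS : S.IsSymm)
    (l τ : ℝ) (hl : 0 < l) (hτ : 0 < τ) :
    ((∀ i j, (Xstar i j = 0 → |S i j - Xstar⁻¹ i j| ≤ l) ∧
        (Xstar i j ≠ 0 → S i j - Xstar⁻¹ i j = -l * Real.sign (Xstar i j))) ↔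
      (∀ i j, Xstar⁻¹ i j =
        clip l (τ * Xstar i j + (Xstar⁻¹ i j - S i j)) + S i j)) :=
  fixed_point_characterization_general Xstar S l τ hl hτ
end
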